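/- Let a > 0 and, for λ ∈ (−1,1), define the complex numbers D_±(λ;a) = 1 + (1 − a²)·(2λ² − 1 ∓ 2iλ√(1 − λ²)). Then: (i) D_±(λ;a) ≠ 0 and |D_±(λ;a)| = √(a⁴ + 4(1 − a²)λ²); (ii) the scattering matrix S_a(λ) := D_−(λ;a)/D_+(λ;a) satisfies |S_a(λ)| = 1, S_a(0) = 1, and S_a(−λ) is the complex conjugate of S_a(λ); (iii) if a ≠ √2, then S_a(λ) → 1 as λ → 1⁻ and as λ → −1⁺. -/

import Mathlib

/-- Boundary value `D_a(λ + i0) = 1 + (1 − a²)(2λ² − 1 − 2iλ√(1 − λ²))` of the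
perturbation determinant. -/
noncomputable def Dplus (a x : ℝ) : ℂ :=
  1 + ((1 - a ^ 2 : ℝ) : ℂ) *
    (((2 * x ^ 2 - 1 : ℝ) : ℂ) - 2 * Complex.I * (x : ℂ) * ((Real.sqrt (1 - x ^ 2) : ℝ) : ℂ))

/-- Boundary value `D_a(λ − i0) = 1 + (1 − a²)(2λ² − 1 + 2iλ√(1 − λ²))` of the
perturbation determinant. -/
noncomputable def Dminus (a x : ℝ) : ℂ :=
  1 + ((1 - a ^ 2 : ℝ) : ℂ) *
    (((2 * x ^ 2 - 1 : ℝ) : ℂ) + 2 * Complex.I * (x : ℂ) * ((Real.sqrt (1 - x ^ 2) : ℝ) : ℂ))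

/-- The scattering matrix `S_a(λ) = D_a(λ − i0)/D_a(λ + i0)`. -/
noncomputable def Smatrix (a x : ℝ) : ℂ := Dminus a x / Dplus a x

/-!
`D₋` is the complex conjugate of `D₊`, so `S_a = D₋ / D₊` is unimodular wherever `D₊ ≠ 0`,
and `|D₊|² = (1 + (1 - a²)(2λ² - 1))² + 4(1 - a²)²λ²(1 - λ²) = a⁴ + 4(1 - a²)λ²`, which is
positive for `a ≠ 0`, `|λ| < 1`. The reflection `λ ↦ -λ` exchanges `D₊` and `D₋`. At `λ = ±1`
both boundary values equal the real number `2 - a²`, so for `a ≠ √2` continuity gives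
`S_a(λ) → 1` at the edges of the spectrum.
-/

open Filter Topology ComplexConjugate

lemma conj_Dplus (a x : ℝ) : conj (Dplus a x) = Dminus a x := by
  simp only [Dplus, Dminus, map_add, map_one, map_mul, map_sub, map_ofNat, Complex.conj_ofReal,
    Complex.conj_I]
  ring

lemma Dplus_neg (a x : ℝ) : Dplus a (-x) = Dminus a x := by
  simp only [Dplus, Dminus, neg_sq]
  push_cast
  ring

lemma Dminus_neg (a x : ℝ) : Dminus a (-x) = Dplus a x := by
  simpa using (Dplus_neg a (-x)).symm

lemma Dplus_zero (a : ℝ) : Dplus a 0 = ((a ^ 2 : ℝ) : ℂ) := by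
  simp only [Dplus]
  push_cast
  ring

lemma Dplus_one (a : ℝ) : Dplus a 1 = ((2 - a ^ 2 : ℝ) : ℂ) := by
  simp only [Dplus]
  push_cast
  norm_num
  ring

lemma normSq_Dplus (a : ℝ) {x : ℝ} (hx : x ^ 2 ≤ 1) :
    Complex.normSq (Dplus a x) = a ^ 4 + 4 * (1 - a ^ 2) * x ^ 2 := by
  have hre_im : Dplus a x = ((1 + (1 - a ^ 2) * (2 * x ^ 2 - 1) : ℝ) : ℂ)
      + ((-((1 - a ^ 2) * (2 * x * Real.sqrt (1 - x ^ 2))) : ℝ) : ℂ) * Complex.I := by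
    simp only [Dplus]
    push_cast
    ring
  rw [hre_im, Complex.normSq_add_mul_I]
  linear_combination (4 * (1 - a ^ 2) ^ 2 * x ^ 2) * Real.sq_sqrt (sub_nonneg.mpr hx)

lemma norm_Dplus (a : ℝ) {x : ℝ} (hx : x ^ 2 ≤ 1) :
    ‖Dplus a x‖ = Real.sqrt (a ^ 4 + 4 * (1 - a ^ 2) * x ^ 2) := by
  rw [Complex.norm_def, normSq_Dplus a hx]

lemma norm_Dminus (a : ℝ) {x : ℝ} (hx : x ^ 2 ≤ 1) :
    ‖Dminus a x‖ = Real.sqrt (a ^ 4 + 4 * (1 - a ^ 2) * x ^ 2) := by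
  rw [← conj_Dplus, Complex.norm_conj, norm_Dplus a hx]

/-- For `a² > 1` this is `a⁴ - 4(a² - 1)x² > a⁴ - 4(a² - 1) = (a² - 2)² ≥ 0`. -/
lemma pow_four_add_four_mul_sq_pos {a x : ℝ} (ha : a ≠ 0) (hx : x ^ 2 < 1) :
    0 < a ^ 4 + 4 * (1 - a ^ 2) * x ^ 2 := by
  have ha2 : 0 < a ^ 2 := by positivity
  rcases le_or_gt (a ^ 2) 1 with h | h
  · nlinarith [sq_nonneg x]
  · nlinarith [sq_nonneg (a ^ 2 - 2), mul_pos (sub_pos.mpr h) (sub_pos.mpr hx)]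

lemma Dplus_ne_zero {a x : ℝ} (ha : a ≠ 0) (hx : x ^ 2 < 1) : Dplus a x ≠ 0 := by
  rw [← norm_pos_iff, norm_Dplus a hx.le, Real.sqrt_pos]
  exact pow_four_add_four_mul_sq_pos ha hx

lemma Dminus_ne_zero {a x : ℝ} (ha : a ≠ 0) (hx : x ^ 2 < 1) : Dminus a x ≠ 0 := by
  rw [← conj_Dplus, map_ne_zero]
  exact Dplus_ne_zero ha hx

lemma Smatrix_eq_conj_div (a x : ℝ) : Smatrix a x = conj (Dplus a x) / Dplus a x := by
  rw [Smatrix, conj_Dplus]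

lemma norm_Smatrix {a x : ℝ} (ha : a ≠ 0) (hx : x ^ 2 < 1) : ‖Smatrix a x‖ = 1 := by
  rw [Smatrix_eq_conj_div, norm_div, Complex.norm_conj,
    div_self (norm_ne_zero_iff.mpr (Dplus_ne_zero ha hx))]

lemma Smatrix_neg (a x : ℝ) : Smatrix a (-x) = conj (Smatrix a x) := by
  rw [Smatrix, Smatrix, Dplus_neg, Dminus_neg, map_div₀, conj_Dplus, ← conj_Dplus,
    Complex.conj_conj]

lemma Smatrix_eq_one_of_Dplus_eq_ofReal {a x : ℝ} (r : ℝ) (hr : r ≠ 0) (h : Dplus a x = r) :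
    Smatrix a x = 1 := by
  rw [Smatrix_eq_conj_div, h, Complex.conj_ofReal, div_self (Complex.ofReal_ne_zero.mpr hr)]

lemma Smatrix_zero {a : ℝ} (ha : a ≠ 0) : Smatrix a 0 = 1 :=
  Smatrix_eq_one_of_Dplus_eq_ofReal _ (pow_ne_zero 2 ha) (Dplus_zero a)

lemma Smatrix_one {a : ℝ} (ha : a ^ 2 ≠ 2) : Smatrix a 1 = 1 :=
  Smatrix_eq_one_of_Dplus_eq_ofReal _ (sub_ne_zero.mpr (Ne.symm ha)) (Dplus_one a)

lemma Smatrix_neg_one {a : ℝ} (ha : a ^ 2 ≠ 2) : Smatrix a (-1) = 1 := by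
  rw [Smatrix_neg, Smatrix_one ha, map_one]

lemma continuous_Dplus (a : ℝ) : Continuous (Dplus a) := by
  unfold Dplus
  fun_prop

lemma continuousAt_Smatrix {a x : ℝ} (hx : Dplus a x ≠ 0) : ContinuousAt (Smatrix a) x := by
  have hD := (continuous_Dplus a).continuousAt (x := x)
  rw [show Smatrix a = fun y => conj (Dplus a y) / Dplus a y from funext (Smatrix_eq_conj_div a)]
  exact (Complex.continuous_conj.continuousAt.comp hD).div hD hx

lemma tendsto_Smatrix_one_left {a : ℝ} (ha : a ^ 2 ≠ 2) :
    Tendsto (Smatrix a) (𝓝[<] 1) (𝓝 1) := by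
  have hD : Dplus a 1 ≠ 0 := by
    rw [Dplus_one, Complex.ofReal_ne_zero]
    exact sub_ne_zero.mpr (Ne.symm ha)
  simpa [Smatrix_one ha] using (continuousAt_Smatrix hD).tendsto.mono_left nhdsWithin_le_nhds

lemma tendsto_Smatrix_neg_one_right {a : ℝ} (ha : a ^ 2 ≠ 2) :
    Tendsto (Smatrix a) (𝓝[>] (-1)) (𝓝 1) := by
  have hD : Dplus a (-1) ≠ 0 := by
    rw [Dplus_neg, ← conj_Dplus, map_ne_zero, Dplus_one, Complex.ofReal_ne_zero]
    exact sub_ne_zero.mpr (Ne.symm ha)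
  simpa [Smatrix_neg_one ha] using
    (continuousAt_Smatrix hD).tendsto.mono_left nhdsWithin_le_nhds

/-- Properties of the scattering matrix for the pair `H₁`, `H_a`: the boundary values
`D_±(λ;a)` do not vanish and have modulus `√(a⁴ + 4(1 − a²)λ²)`; `S_a` is unimodular,
`S_a(0) = 1`, `S_a(−λ) = conj(S_a(λ))`; and if `a ≠ √2` then `S_a(λ) → 1` as
`λ → 1⁻` and as `λ → −1⁺`. -/
theorem stmt9 (a : ℝ) (ha : 0 < a) :
    (∀ x ∈ Set.Ioo (-1 : ℝ) 1,
      Dplus a x ≠ 0 ∧ Dminus a x ≠ 0 ∧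
      ‖Dplus a x‖ = Real.sqrt (a ^ 4 + 4 * (1 - a ^ 2) * x ^ 2) ∧
      ‖Dminus a x‖ = Real.sqrt (a ^ 4 + 4 * (1 - a ^ 2) * x ^ 2)) ∧
    (∀ x ∈ Set.Ioo (-1 : ℝ) 1, ‖Smatrix a x‖ = 1) ∧
    Smatrix a 0 = 1 ∧
    (∀ x ∈ Set.Ioo (-1 : ℝ) 1, Smatrix a (-x) = starRingEnd ℂ (Smatrix a x)) ∧
    (a ≠ Real.sqrt 2 →
      Filter.Tendsto (Smatrix a) (nhdsWithin 1 (Set.Iio 1)) (nhds 1) ∧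
      Filter.Tendsto (Smatrix a) (nhdsWithin (-1) (Set.Ioi (-1))) (nhds 1)) := by
  have hsq : ∀ x ∈ Set.Ioo (-1 : ℝ) 1, x ^ 2 < 1 := fun x hx =>
    sq_lt_one_iff_abs_lt_one x |>.mpr (abs_lt.mpr hx)
  refine ⟨fun x hx => ⟨Dplus_ne_zero ha.ne' (hsq x hx), Dminus_ne_zero ha.ne' (hsq x hx),
      norm_Dplus a (hsq x hx).le, norm_Dminus a (hsq x hx).le⟩,
    fun x hx => norm_Smatrix ha.ne' (hsq x hx), Smatrix_zero ha.ne',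
    fun x _ => Smatrix_neg a x, fun h => ?_⟩
  have ha2 : a ^ 2 ≠ 2 := fun h2 => h (by rw [← h2, Real.sqrt_sq ha.le])
  exact ⟨tendsto_Smatrix_one_left ha2, tendsto_Smatrix_neg_one_right ha2⟩
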